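/- In a geodesic δ-hyperbolic space, let σ be a geodesic segment and let a and b be two points having a common orthogonal projection c on σ. Let d be a point of σ and let c₁ be an orthogonal projection of d on a geodesic segment ab. Then |d - c| ≤ |d - c₁| + 6δ. -/

import Mathlib

open Metric Set

/-- `s` is a geodesic segment from `x` to `y`. -/
def IsGeodSeg {X : Type*} [MetricSpace X] (x y : X) (s : Set X) : Prop :=
  ∃ f : ℝ → X, f 0 = x ∧ f (dist x y) = y ∧
    (∀ a ∈ Icc (0:ℝ) (dist x y), ∀ b ∈ Icc (0:ℝ) (dist x y), dist (f a) (f b) = |a - b|) ∧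
    s = f '' Icc (0:ℝ) (dist x y)

/-- A geodesic metric space: any two points are joined by a geodesic segment. -/
def GeodesicSpace (X : Type*) [MetricSpace X] : Prop :=
  ∀ x y : X, ∃ s : Set X, IsGeodSeg x y s

/-- δ-hyperbolicity via δ-thin geodesic triangles. -/
def ThinTriangles (X : Type*) [MetricSpace X] (δ : ℝ) : Prop :=
  ∀ (x y z : X) (sxy syz sxz : Set X),
    IsGeodSeg x y sxy → IsGeodSeg y z syz → IsGeodSeg x z sxz →
    ∀ p ∈ sxy, infDist p (syz ∪ sxz) ≤ δ

/-!
Points of `[a, c]` and `[b, c]` keep `c` as a nearest point of `σ`, so a point `δ`-close to one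
of them is within `2δ` plus its distance to `σ` from `c`. By thinness of the triangle `(a, b, d)`,
`c₁` is `δ`-close to some `c₂` on `[a, d]`, say. In the triangle `(a, d, c)`, whose side `[d, c]`
lies in `σ`, either `c₂` is `δ`-close to `σ`, which gives `|c₁ - c| ≤ 4δ`, or, by connectedness,
some `m` between `c₂` and `d` is `δ`-close to both `[a, c]` and `[d, c]`, which gives
`|d - c| ≤ |d - m| + 3δ ≤ |d - c₂| + 3δ`. Either way `|d - c| ≤ |d - c₁| + 4δ`.
-/

namespace IsGeodSeg

variable {X : Type*} [MetricSpace X] {x y p q : X} {s : Set X}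

theorem left_mem (h : IsGeodSeg x y s) : x ∈ s := by
  obtain ⟨f, h0, -, -, rfl⟩ := h
  exact ⟨0, ⟨le_rfl, dist_nonneg⟩, h0⟩

theorem right_mem (h : IsGeodSeg x y s) : y ∈ s := by
  obtain ⟨f, -, hL, -, rfl⟩ := h
  exact ⟨dist x y, ⟨dist_nonneg, le_rfl⟩, hL⟩

theorem dist_add_dist_eq (h : IsGeodSeg x y s) (hp : p ∈ s) :
    dist x p + dist p y = dist x y := by
  obtain ⟨f, h0, hL, hiso, rfl⟩ := h
  obtain ⟨t, ht, rfl⟩ := hp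
  have h0' : (0 : ℝ) ∈ Icc 0 (dist x y) := ⟨le_rfl, dist_nonneg⟩
  have hL' : dist x y ∈ Icc 0 (dist x y) := ⟨dist_nonneg, le_rfl⟩
  conv_lhs => rw [← h0, hiso 0 h0' t ht]; rw [← hL, hiso t ht _ hL']
  rw [abs_of_nonpos (by linarith [ht.1]), abs_of_nonpos (by linarith [ht.2])]
  ring

theorem exists_continuousOn_image (h : IsGeodSeg x y s) :
    ∃ f : ℝ → X, ContinuousOn f (Icc 0 (dist x y)) ∧ s = f '' Icc 0 (dist x y) := by
  obtain ⟨f, -, -, hiso, rfl⟩ := h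
  have hlip : LipschitzOnWith 1 f (Icc 0 (dist x y)) := by
    refine LipschitzOnWith.of_dist_le_mul fun a ha b hb => ?_
    rw [hiso a ha b hb, Real.dist_eq, NNReal.coe_one, one_mul]
  exact ⟨f, hlip.continuousOn, rfl⟩

theorem isPreconnected (h : IsGeodSeg x y s) : IsPreconnected s := by
  obtain ⟨f, hf, rfl⟩ := h.exists_continuousOn_image
  exact isPreconnected_Icc.image f hf

theorem isCompact (h : IsGeodSeg x y s) : IsCompact s := by
  obtain ⟨f, hf, rfl⟩ := h.exists_continuousOn_image
  exact isCompact_Icc.image_of_continuousOn hf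

theorem symm (h : IsGeodSeg x y s) : IsGeodSeg y x s := by
  obtain ⟨f, h0, hL, hiso, rfl⟩ := h
  refine ⟨fun t => f (dist x y - t), by simpa using hL, by simpa [dist_comm y x] using h0,
    fun a ha b hb => ?_, ?_⟩
  · rw [dist_comm y x] at ha hb
    rw [hiso _ ⟨by linarith [ha.2], by linarith [ha.1]⟩ _ ⟨by linarith [hb.2], by linarith [hb.1]⟩,
      abs_sub_comm]
    ring_nf
  · rw [dist_comm y x, ← image_image f (dist x y - ·), image_const_sub_Icc, sub_self, sub_zero]

theorem image_Icc_of_isometryOn {f : ℝ → X} {D u v : ℝ}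
    (hiso : ∀ a ∈ Icc (0:ℝ) D, ∀ b ∈ Icc (0:ℝ) D, dist (f a) (f b) = |a - b|)
    (hu : u ∈ Icc 0 D) (hv : v ∈ Icc 0 D) (huv : u ≤ v) :
    IsGeodSeg (f u) (f v) (f '' Icc u v) := by
  have hdist : dist (f u) (f v) = v - u := by
    rw [hiso u hu v hv, abs_of_nonpos (by linarith), neg_sub]
  refine ⟨fun r => f (u + r), by simp, by simp [hdist], fun a ha b hb => ?_, ?_⟩
  · rw [hdist] at ha hb
    rw [hiso _ ⟨by linarith [hu.1, ha.1], by linarith [hv.2, ha.2]⟩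
      _ ⟨by linarith [hu.1, hb.1], by linarith [hv.2, hb.2]⟩, add_sub_add_left_eq_sub]
  · rw [hdist, ← image_image f (u + ·), image_const_add_Icc, add_zero, add_sub_cancel]

theorem exists_subset (h : IsGeodSeg x y s) (hp : p ∈ s) (hq : q ∈ s) :
    ∃ t, IsGeodSeg p q t ∧ t ⊆ s := by
  obtain ⟨f, -, -, hiso, rfl⟩ := h
  obtain ⟨u, hu, rfl⟩ := hp
  obtain ⟨v, hv, rfl⟩ := hq
  rcases le_total u v with huv | hvu
  · exact ⟨_, image_Icc_of_isometryOn hiso hu hv huv, image_mono (Icc_subset_Icc hu.1 hv.2)⟩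
  · exact ⟨_, (image_Icc_of_isometryOn hiso hv hu hvu).symm,
      image_mono (Icc_subset_Icc hv.1 hu.2)⟩

end IsGeodSeg

section

variable {X : Type*} [MetricSpace X] {δ : ℝ}

theorem ThinTriangles.exists_dist_le (hthin : ThinTriangles X δ) {x y z p : X}
    {sxy syz sxz : Set X} (hxy : IsGeodSeg x y sxy) (hyz : IsGeodSeg y z syz)
    (hxz : IsGeodSeg x z sxz) (hp : p ∈ sxy) : ∃ w ∈ syz ∪ sxz, dist p w ≤ δ := by
  obtain ⟨w, hw, hpw⟩ := (hyz.isCompact.union hxz.isCompact).exists_infDist_eq_dist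
    ⟨y, Or.inl hyz.left_mem⟩ p
  exact ⟨w, hw, hpw ▸ hthin x y z sxy syz sxz hxy hyz hxz p hp⟩

theorem IsGeodSeg.exists_dist_le_of_infDist_le {x y p : X} {s : Set X} (h : IsGeodSeg x y s)
    (hp : infDist p s ≤ δ) : ∃ z ∈ s, dist p z ≤ δ := by
  obtain ⟨z, hz, hpz⟩ := h.isCompact.exists_infDist_eq_dist ⟨x, h.left_mem⟩ p
  exact ⟨z, hz, hpz ▸ hp⟩

theorem IsPreconnected.exists_infDist_le_and {s A B : Set X} (hs : IsPreconnected s)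
    (hcov : ∀ m ∈ s, infDist m A ≤ δ ∨ infDist m B ≤ δ) {p q : X} (hp : p ∈ s) (hq : q ∈ s)
    (hpA : infDist p A ≤ δ) (hqB : infDist q B ≤ δ) :
    ∃ m ∈ s, infDist m A ≤ δ ∧ infDist m B ≤ δ :=
  isPreconnected_closed_iff.1 hs _ _
    (isClosed_le (continuous_infDist_pt A) continuous_const)
    (isClosed_le (continuous_infDist_pt B) continuous_const) hcov ⟨p, hp, hpA⟩ ⟨q, hq, hqB⟩

theorem IsGeodSeg.dist_le_of_dist_eq_infDist {a c u z : X} {σ α : Set X}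
    (hα : IsGeodSeg a c α) (hc : dist a c = infDist a σ) (hu : u ∈ α) (hz : z ∈ σ) :
    dist u c ≤ dist u z := by
  have hau := hα.dist_add_dist_eq hu
  have hac : dist a c ≤ dist a z := hc ▸ infDist_le_dist_of_mem hz
  linarith [dist_triangle a u z]

theorem IsGeodSeg.dist_le_two_mul_dist_add_dist {a c u z : X} {σ α : Set X}
    (hα : IsGeodSeg a c α) (hc : dist a c = infDist a σ) (hu : u ∈ α) (hz : z ∈ σ) (w : X) :
    dist w c ≤ 2 * dist w u + dist w z := by
  have := hα.dist_le_of_dist_eq_infDist hc hu hz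
  linarith [dist_triangle w u c, dist_triangle u w z, dist_comm w u]

variable {a b c : X} {σ τ : Set X}

theorem dist_le_of_mem_of_common_proj (hgeo : GeodesicSpace X) (hthin : ThinTriangles X δ)
    (hcPa : dist a c = infDist a σ) (hcPb : dist b c = infDist b σ) (hτ : IsGeodSeg a b τ)
    {p z : X} (hp : p ∈ τ) (hz : z ∈ σ) : dist p c ≤ 2 * δ + dist p z := by
  obtain ⟨α, hα⟩ := hgeo a c
  obtain ⟨β, hβ⟩ := hgeo b c
  obtain ⟨u, hu | hu, hpu⟩ := hthin.exists_dist_le hτ hβ hα hp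
  · linarith [hβ.dist_le_two_mul_dist_add_dist hcPb hu hz p]
  · linarith [hα.dist_le_two_mul_dist_add_dist hcPa hu hz p]

theorem dist_le_of_common_proj_of_near_side (hgeo : GeodesicSpace X)
    (hthin : ThinTriangles X δ) (hcPa : dist a c = infDist a σ)
    (hcPb : dist b c = infDist b σ) (hτ : IsGeodSeg a b τ) {d c₁ c₂ : X} {γ s : Set X}
    (hc₁ : c₁ ∈ τ) (hγ : IsGeodSeg a d γ) (hc₂ : c₂ ∈ γ) (h12 : dist c₁ c₂ ≤ δ)
    (hs : IsGeodSeg d c s) (hsσ : s ⊆ σ) :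
    dist d c ≤ dist d c₁ + 4 * δ := by
  obtain ⟨α, hα⟩ := hgeo a c
  obtain ⟨w, hw | hw, hc₂w⟩ := hthin.exists_dist_le hγ hs hα hc₂
  · have := dist_le_of_mem_of_common_proj hgeo hthin hcPa hcPb hτ hc₁ (hsσ hw)
    linarith [dist_triangle d c₁ c, dist_triangle c₁ c₂ w]
  · -- Along `[c₂, d]` the side `[a, d]` passes from near `[a, c]` to near `[d, c]`.
    obtain ⟨t, ht, htγ⟩ := hγ.exists_subset hc₂ hγ.right_mem
    have hcov : ∀ m ∈ t, infDist m α ≤ δ ∨ infDist m s ≤ δ := fun m hm => by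
      obtain ⟨v, hv | hv, hmv⟩ := hthin.exists_dist_le hγ hs hα (htγ hm)
      · exact Or.inr ((infDist_le_dist_of_mem hv).trans hmv)
      · exact Or.inl ((infDist_le_dist_of_mem hv).trans hmv)
    have hds : infDist d s ≤ δ := by
      rw [infDist_zero_of_mem hs.left_mem]
      exact dist_nonneg.trans h12
    obtain ⟨m, hm, hmα, hms⟩ := ht.isPreconnected.exists_infDist_le_and hcov ht.left_mem
      ht.right_mem ((infDist_le_dist_of_mem hw).trans hc₂w) hds
    obtain ⟨u, hu, hmu⟩ := hα.exists_dist_le_of_infDist_le hmα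
    obtain ⟨z, hz, hmz⟩ := hs.exists_dist_le_of_infDist_le hms
    have hdm : dist d m ≤ dist d c₂ := by
      linarith [ht.dist_add_dist_eq hm, dist_nonneg (x := c₂) (y := m), dist_comm d m,
        dist_comm d c₂]
    linarith [hα.dist_le_two_mul_dist_add_dist hcPa hu (hsσ hz) m, dist_triangle d m c,
      dist_triangle d c₁ c₂]

end

theorem lemma5_common_projection_general {X : Type*} [MetricSpace X] (δ : ℝ)
    (hgeo : GeodesicSpace X) (hthin : ThinTriangles X δ)
    (x y a b c d c₁ : X) (σ τ : Set X)
    (hσ : IsGeodSeg x y σ)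
    (hc : c ∈ σ) (hcPa : dist a c = infDist a σ) (hcPb : dist b c = infDist b σ)
    (hd : d ∈ σ)
    (hτ : IsGeodSeg a b τ)
    (hc₁ : c₁ ∈ τ) :
    dist d c ≤ dist d c₁ + 6 * δ := by
  obtain ⟨γa, hγa⟩ := hgeo a d
  obtain ⟨γb, hγb⟩ := hgeo b d
  obtain ⟨s, hs, hsσ⟩ := hσ.exists_subset hd hc
  obtain ⟨c₂, hc₂, h12⟩ := hthin.exists_dist_le hτ hγb hγa hc₁
  have hδ : 0 ≤ δ := dist_nonneg.trans h12
  have h4 : dist d c ≤ dist d c₁ + 4 * δ := by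
    rcases hc₂ with hc₂ | hc₂
    · exact dist_le_of_common_proj_of_near_side hgeo hthin hcPb hcPa hτ.symm hc₁ hγb hc₂ h12
        hs hsσ
    · exact dist_le_of_common_proj_of_near_side hgeo hthin hcPa hcPb hτ hc₁ hγa hc₂ h12 hs hsσ
  linarith

theorem lemma5_common_projection {X : Type*} [MetricSpace X] (δ : ℝ) (hδ : 0 ≤ δ)
    (hgeo : GeodesicSpace X) (hthin : ThinTriangles X δ)
    (x y a b c d c₁ : X) (σ τ : Set X)
    (hσ : IsGeodSeg x y σ)
    (hc : c ∈ σ) (hcPa : dist a c = infDist a σ) (hcPb : dist b c = infDist b σ)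
    (hd : d ∈ σ)
    (hτ : IsGeodSeg a b τ)
    (hc₁ : c₁ ∈ τ) (hc₁P : dist d c₁ = infDist d τ) :
    dist d c ≤ dist d c₁ + 6 * δ :=
  lemma5_common_projection_general δ hgeo hthin x y a b c d c₁ σ τ hσ hc hcPa hcPb hd hτ hc₁
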